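/- For each λ ∈ ℂ, the 4-dimensional complex algebra with basis e1,e2,e3,e4 and nonzero products e1e1 = e2, e1e2 = e4, e2e1 = λe4, e2e2 = e3 is a nilpotent CD-algebra, and for λ ≠ λ' the corresponding algebras are non-isomorphic. -/
import Mathlib


/-- The three degree-4 identities defining a CD-algebra. -/
def IsCD {A : Type*} [AddCommGroup A] (m : A → A → A) : Prop :=
  (∀ a b x y : A,
      m (m (m x y) a) b - m (m (m x y) b) a =
        m (m (m x a) b - m (m x b) a) y + m x (m (m y a) b - m (m y b) a)) ∧
  (∀ a b x y : A,
      m (m a (m x y)) b - m a (m (m x y) b) =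
        m (m (m a x) b - m a (m x b)) y + m x (m (m a y) b - m a (m y b))) ∧
  (∀ a b x y : A,
      m a (m b (m x y)) - m b (m a (m x y)) =
        m (m a (m b x) - m b (m a x)) y + m x (m a (m b y) - m b (m a y)))

/-- The CD-cocycle conditions for a map `θ : A × A → V`. -/
def IsCDCocycle {A V : Type*} [AddCommGroup A] [AddCommGroup V]
    (m : A → A → A) (θ : A → A → V) : Prop :=
  (∀ a b x y : A,
      θ (m (m x y) a) b - θ (m (m x y) b) a =
        θ (m (m x a) b - m (m x b) a) y + θ x (m (m y a) b - m (m y b) a)) ∧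
  (∀ a b x y : A,
      θ (m a (m x y)) b - θ a (m (m x y) b) =
        θ (m (m a x) b - m a (m x b)) y + θ x (m (m a y) b - m a (m y b))) ∧
  (∀ a b x y : A,
      θ a (m b (m x y)) - θ b (m a (m x y)) =
        θ (m a (m b x) - m b (m a x)) y + θ x (m a (m b y) - m b (m a y)))

/-- Evaluation of a nonassociative word in `A` under the multiplication `m`. -/
def magEval {A : Type*} (m : A → A → A) : FreeMagma A → A
  | FreeMagma.of a => a
  | FreeMagma.mul x y => m (magEval m x) (magEval m y)

/-- The number of letters of a nonassociative word. -/
def magLen {A : Type*} : FreeMagma A → ℕ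
  | FreeMagma.of _ => 1
  | FreeMagma.mul x y => magLen x + magLen y

/-- An algebra is nilpotent iff all sufficiently long products vanish. -/
def IsNilpotentMul {A : Type*} [AddCommGroup A] (m : A → A → A) : Prop :=
  ∃ n : ℕ, ∀ w : FreeMagma A, n ≤ magLen w → magEval m w = 0

/-- The family of algebras with e1e1 = e2, e1e2 = e4, e2e1 = λe4, e2e2 = e3. -/
noncomputable def mulC407 (l : ℂ) (u v : Fin 4 → ℂ) : Fin 4 → ℂ :=
  Pi.single (1 : Fin 4) (u 0 * v 0) + Pi.single (2 : Fin 4) (u 1 * v 1) +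
    Pi.single (3 : Fin 4) (u 0 * v 1 + l * (u 1 * v 0))


private lemma mC4_0 (l : ℂ) (u v : Fin 4 → ℂ) : mulC407 l u v 0 = 0 := by
  simp [mulC407, Pi.single_apply]
private lemma mC4_1 (l : ℂ) (u v : Fin 4 → ℂ) : mulC407 l u v 1 = u 0 * v 0 := by
  simp [mulC407, Pi.single_apply]

private lemma magLen_pos {A : Type*} (w : FreeMagma A) : 1 ≤ magLen w := by
  induction w with
  | ih1 a => simp [magLen]
  | ih2 x y ihx ihy => simp only [magLen]; omega

private lemma mC4_eval0 (l : ℂ) (w : FreeMagma (Fin 4 → ℂ)) (h : 2 ≤ magLen w) :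
    magEval (mulC407 l) w 0 = 0 := by
  cases w with
  | of a => simp [magLen] at h
  | mul x y => exact mC4_0 l _ _

private lemma mC4_eval1 (l : ℂ) (w : FreeMagma (Fin 4 → ℂ)) (h : 3 ≤ magLen w) :
    magEval (mulC407 l) w 1 = 0 := by
  cases w with
  | of a => simp [magLen] at h
  | mul x y =>
    have hx := magLen_pos x
    have hy := magLen_pos y
    have hor : 2 ≤ magLen x ∨ 2 ≤ magLen y := by simp only [magLen] at h; omega
    rw [show magEval (mulC407 l) (FreeMagma.mul x y)
        = mulC407 l (magEval (mulC407 l) x) (magEval (mulC407 l) y) from rfl, mC4_1]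
    rcases hor with h2 | h2
    · rw [mC4_eval0 l x h2]; ring
    · rw [mC4_eval0 l y h2]; ring

private lemma mC4_evalnil (l : ℂ) (w : FreeMagma (Fin 4 → ℂ)) (h : 5 ≤ magLen w) :
    magEval (mulC407 l) w = 0 := by
  cases w with
  | of a => simp [magLen] at h
  | mul x y =>
    have hx := magLen_pos x
    have hy := magLen_pos y
    have hor : 3 ≤ magLen x ∨ 3 ≤ magLen y := by simp only [magLen] at h; omega
    have hrfl : magEval (mulC407 l) (FreeMagma.mul x y)
        = mulC407 l (magEval (mulC407 l) x) (magEval (mulC407 l) y) := rfl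
    rcases hor with h3 | h3
    · have e0 := mC4_eval0 l x (by omega)
      have e1 := mC4_eval1 l x h3
      funext i
      fin_cases i <;> rw [hrfl] <;> simp [mulC407, Pi.single_apply, e0, e1]
    · have e0 := mC4_eval0 l y (by omega)
      have e1 := mC4_eval1 l y h3
      funext i
      fin_cases i <;> rw [hrfl] <;> simp [mulC407, Pi.single_apply, e0, e1]

/-- For each λ the algebra e1e1=e2, e1e2=e4, e2e1=λe4, e2e2=e3 is a nilpotent
CD-algebra, and for λ ≠ λ' the corresponding algebras are non-isomorphic. -/
theorem C407_nilpotent_CD_pairwise_noniso :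
    (∀ l : ℂ, IsCD (mulC407 l) ∧ IsNilpotentMul (mulC407 l)) ∧
      ∀ l l' : ℂ,
        (∃ φ : (Fin 4 → ℂ) ≃ₗ[ℂ] (Fin 4 → ℂ),
          ∀ u v : Fin 4 → ℂ, φ (mulC407 l u v) = mulC407 l' (φ u) (φ v)) → l = l' := by
  constructor
  · intro l
    refine ⟨⟨?_, ?_, ?_⟩, ⟨5, fun w hw => mC4_evalnil l w hw⟩⟩ <;>
      (intro a b x y; funext i; fin_cases i <;> simp [mulC407, Pi.single_apply] <;> ring)
  · rintro l l' ⟨φ, hφ⟩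
    set e1 : Fin 4 → ℂ := Pi.single (0 : Fin 4) 1 with he1
    set e2 : Fin 4 → ℂ := Pi.single (1 : Fin 4) 1 with he2
    set e4 : Fin 4 → ℂ := Pi.single (3 : Fin 4) 1 with he4
    have h11 : mulC407 l e1 e1 = e2 := by
      funext i; fin_cases i <;> simp [mulC407, e1, e2, Pi.single_apply]
    have h12 : mulC407 l e1 e2 = e4 := by
      funext i; fin_cases i <;> simp [mulC407, e1, e2, e4, Pi.single_apply]
    have h21 : mulC407 l e2 e1 = l • e4 := by
      funext i; fin_cases i <;> simp [mulC407, e1, e2, e4, Pi.single_apply]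
    set f : Fin 4 → ℂ := φ e1 with hf
    have hg : φ e2 = mulC407 l' f f := by rw [← h11, hφ]
    have hfg : φ e4 = mulC407 l' f (mulC407 l' f f) := by rw [← h12, hφ, hg]
    have hgf : l • φ e4 = mulC407 l' (mulC407 l' f f) f := by
      rw [← map_smul, ← h21, hφ, hg]
    have hf0 : f 0 ≠ 0 := by
      intro h0
      have hz : φ e4 = 0 := by
        rw [hfg]; funext i
        fin_cases i <;> simp [mulC407, Pi.single_apply, h0]
      have he40 : e4 = 0 := φ.injective (hz.trans (map_zero φ).symm)
      have : (e4 : Fin 4 → ℂ) 3 = 0 := by rw [he40]; rfl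
      simp [e4] at this
    have key := congrFun hgf 3
    rw [hfg] at key
    have key' : l * (f 0 * (f 0 * f 0)) = l' * (f 0 * (f 0 * f 0)) := by
      have hk := key
      simp [mulC407, Pi.single_apply, smul_eq_mul] at hk
      linear_combination hk
    have hcube : (f 0 * (f 0 * f 0)) ≠ 0 := mul_ne_zero hf0 (mul_ne_zero hf0 hf0)
    exact mul_right_cancel₀ hcube key'
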